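/- Each of the four composite maps βγ, γα, αβ and αβγ : T⁷ → T⁷ has no fixed points: for every x ∈ T⁷, (β∘γ)(x) ≠ x, (γ∘α)(x) ≠ x, (α∘β)(x) ≠ x, and (α∘β∘γ)(x) ≠ x. -/

import Mathlib

/-!
On each composite one coordinate is moved by the translation `y ↦ y ± ½` (coordinate x₇ for βγ,
x₅ for γα and αβγ, x₆ for αβ), and `½ ≠ 0` in `ℝ/ℤ`, so no point is fixed.
-/

noncomputable section

/-- The 7-torus T⁷ = (ℝ/ℤ)⁷. -/
abbrev T7 := Fin 7 → AddCircle (1 : ℝ)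

/-- The class of 1/2 in ℝ/ℤ. -/
def half : AddCircle (1 : ℝ) := ((1 / 2 : ℝ) : AddCircle (1 : ℝ))

/-- α : T⁷ → T⁷, α(x₁,…,x₇) = (x₁, x₂, x₃, −x₄, −x₅, −x₆, −x₇). -/
def alphaT (x : T7) : T7 := ![x 0, x 1, x 2, -x 3, -x 4, -x 5, -x 6]

/-- β : T⁷ → T⁷, β(x₁,…,x₇) = (x₁, −x₂, −x₃, x₄, x₅, ½−x₆, −x₇). -/
def betaT (x : T7) : T7 := ![x 0, -x 1, -x 2, x 3, x 4, half - x 5, -x 6]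

/-- γ : T⁷ → T⁷, γ(x₁,…,x₇) = (−x₁, x₂, −x₃, x₄, ½−x₅, x₆, ½−x₇). -/
def gammaT (x : T7) : T7 := ![-x 0, x 1, -x 2, x 3, half - x 4, x 5, half - x 6]

theorem addOrderOf_half : addOrderOf half = 2 := by
  have h := AddCircle.addOrderOf_period_div (p := (1 : ℝ)) two_pos
  rwa [Nat.cast_ofNat] at h

theorem half_ne_zero : half ≠ 0 := by
  intro h
  simpa [h] using addOrderOf_half

section AddCommGroup

variable {G : Type*} [AddCommGroup G] {c y : G}

theorem eq_zero_of_neg_sub_eq_self (h : -(c - y) = y) : c = 0 := by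
  rwa [neg_sub, sub_eq_self] at h

theorem eq_zero_of_sub_neg_eq_self (h : c - -y = y) : c = 0 := by
  rwa [sub_neg_eq_add, add_eq_right] at h

end AddCommGroup

/-- The composites βγ, γα, αβ and αβγ act freely on T⁷: none of them has a fixed point. -/
theorem composites_have_no_fixed_points :
    ∀ x : T7, betaT (gammaT x) ≠ x ∧ gammaT (alphaT x) ≠ x ∧ alphaT (betaT x) ≠ x ∧
      alphaT (betaT (gammaT x)) ≠ x := by
  intro x
  refine ⟨fun h => ?_, fun h => ?_, fun h => ?_, fun h => ?_⟩ <;> apply half_ne_zero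
  · exact eq_zero_of_neg_sub_eq_self (congrFun h 6)
  · exact eq_zero_of_sub_neg_eq_self (congrFun h 4)
  · exact eq_zero_of_neg_sub_eq_self (congrFun h 5)
  · exact eq_zero_of_neg_sub_eq_self (congrFun h 4)
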